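/- arXiv:1504.00481 — 6 statements merged into one kernel-verified Lean document; each statement's English description precedes it below -/
import Mathlib

section
/- Let F be a field, s_1,…,s_m ∈ F^n, P ⊆ {1,…,n}, and η ∈ {1,…,n}. Suppose there exists a function f : F^m × F^P → F such that for every x ∈ F^n, f(s_1·x, …, s_m·x, (x_j)_{j∈P}) = x_η. Then the standard basis vector e_η lies in the span of {s_1,…,s_m} ∪ {e_j : j ∈ P}. -/
open Matrix Submodule

theorem mem_span_of_forall_dotProduct_eq_zero {K ι : Type*} [Field K] [Fintype ι]
    [DecidableEq ι] {S : Set (ι → K)} {v : ι → K}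
    (h : ∀ y, (∀ u ∈ S, u ⬝ᵥ y = 0) → v ⬝ᵥ y = 0) : v ∈ span K S := by
  rw [← Subspace.dualAnnihilator_dualCoannihilator_eq (W := span K S), mem_dualCoannihilator]
  intro φ hφ
  obtain ⟨y, rfl⟩ := (dotProductEquiv K ι).surjective φ
  have hS : ∀ u ∈ S, u ⬝ᵥ y = 0 := fun u hu => by
    rw [dotProduct_comm]
    exact (mem_dualAnnihilator _).1 hφ u (subset_span hu)
  simpa [dotProduct_comm] using h y hS

/-- The decoder receives the same data from `y` as from `0`. -/
theorem apply_eq_zero_of_decodable {R ι κ : Type*} [Semiring R] [Fintype ι]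
    (s : κ → ι → R) (P : Set ι) (η : ι) (f : (κ → R) → (P → R) → R)
    (hf : ∀ x : ι → R, f (fun i => s i ⬝ᵥ x) (fun j => x j) = x η) {y : ι → R}
    (hs : ∀ i, s i ⬝ᵥ y = 0) (hP : ∀ j ∈ P, y j = 0) : y η = 0 :=
  calc y η = f (fun i => s i ⬝ᵥ y) (fun j => y j) := (hf y).symm
    _ = f (fun i => s i ⬝ᵥ 0) (fun j => (0 : ι → R) j) := by
      congr 1
      · funext i; simp [hs]
      · funext j; simp [hP j j.2]
    _ = 0 := hf 0

/-- Let `F` be a field, `s_1,…,s_m ∈ F^n`, `P ⊆ {1,…,n}`, and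
`η ∈ {1,…,n}`. Suppose there exists a function `f : F^m × F^P → F` such that for every
`x ∈ F^n`, `f (s_1 ⬝ᵥ x, …, s_m ⬝ᵥ x) ((x_j)_{j ∈ P}) = x_η`. Then the standard basis
vector `e_η` lies in the span of `{s_1,…,s_m} ∪ {e_j : j ∈ P}`. -/
theorem single_mem_span_of_decodable {F : Type*} [Field F] {n m : ℕ}
    (s : Fin m → Fin n → F) (P : Set (Fin n)) (η : Fin n)
    (f : (Fin m → F) → (P → F) → F)
    (hf : ∀ x : Fin n → F, f (fun i => s i ⬝ᵥ x) (fun j => x j) = x η) :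
    Pi.single η (1 : F) ∈
      Submodule.span F (Set.range s ∪ {v | ∃ j ∈ P, v = Pi.single j 1}) := by
  refine mem_span_of_forall_dotProduct_eq_zero fun y hy => ?_
  rw [single_dotProduct, one_mul]
  refine apply_eq_zero_of_decodable s P η f hf (fun i => hy _ (Or.inl ⟨i, rfl⟩)) fun j hj => ?_
  simpa using hy _ (Or.inr ⟨j, hj, rfl⟩)
end

section
/- For an instance of the one-round data dissemination problem: if at least one admissible tuple of matrices exists, then the minimum total number of transmissions over all valid one-round schemes equals the minimum of Σ_{ℓ∈V} rank(A_ℓ) over all admissible tuples (A_ℓ)_{ℓ∈V}; and if no admissible tuple exists, then no valid one-round scheme exists. -/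
open Matrix

/-- A valid one-round scheme for the data dissemination instance given by the directed
graph `E` on node set `V`, possession sets `P` and request sets `T`: each node `ℓ`
broadcasts the finite set of vectors `S ℓ`, each supported on its possession set, and every
node `ℓ` can decode `x_η` for `η ∈ T ℓ`, i.e. `e_η` lies in the span of the vectors sent by
its in-neighbors together with `{e_j : j ∈ P ℓ}`. -/
def ValidScheme {F V : Type*} [Field F] {n : ℕ} (E : V → V → Prop)
    (P T : V → Set (Fin n)) (S : V → Finset (Fin n → F)) : Prop :=
  (∀ ℓ, ∀ v ∈ S ℓ, ∀ i, i ∉ P ℓ → v i = 0) ∧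
  (∀ ℓ, ∀ η ∈ T ℓ, Pi.single η (1 : F) ∈
    Submodule.span F ((⋃ j ∈ {v | E v ℓ}, (S j : Set (Fin n → F))) ∪
      {v | ∃ j ∈ P ℓ, v = Pi.single j 1}))

/-- An admissible tuple of `n × n` matrices `(A ℓ)_{ℓ ∈ V}`: every entry of `A ℓ` in a
column outside `P ℓ` is zero, and for every `ℓ` and every `η ∈ T ℓ`, `e_η` lies in the span
of the rows of the matrices `A j` for in-neighbors `j` of `ℓ`, together with
`{e_j : j ∈ P ℓ}`. -/
def AdmissibleTuple {F V : Type*} [Field F] {n : ℕ} (E : V → V → Prop)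
    (P T : V → Set (Fin n)) (A : V → Matrix (Fin n) (Fin n) F) : Prop :=
  (∀ ℓ, ∀ i j, j ∉ P ℓ → A ℓ i j = 0) ∧
  (∀ ℓ, ∀ η ∈ T ℓ, Pi.single η (1 : F) ∈
    Submodule.span F ((⋃ j ∈ {v | E v ℓ}, Set.range (A j)) ∪
      {v | ∃ j ∈ P ℓ, v = Pi.single j 1}))

/-!
Both a valid scheme and an admissible tuple matter only through the subspaces `W ℓ` that
they span at each node: decodability is a condition on these spans, a finite set spanning
`W ℓ` has at least `dim W ℓ` elements, and an `n × n` matrix with row space `W ℓ` has rank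
exactly `dim W ℓ`. Conversely a basis of `W ℓ` serves both as a transmitted set and as the
nonzero rows of a matrix. So every scheme yields a tuple of no larger total rank and vice
versa, and the two minima coincide.
-/

namespace Submodule

variable {F M : Type*} [DivisionRing F] [AddCommGroup M] [Module F M]

theorem exists_span_range_eq_of_finrank_le {m : Type*} [Fintype m] (W : Submodule F M)
    [FiniteDimensional F W] (h : Module.finrank F W ≤ Fintype.card m) :
    ∃ f : m → M, span F (Set.range f) = W := by
  let b := Module.finBasis F W
  obtain ⟨e⟩ := Function.Embedding.nonempty_of_card_le (α := Fin (Module.finrank F W)) (β := m)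
    (by rwa [Fintype.card_fin])
  refine ⟨Function.extend e (W.subtype ∘ b) 0, le_antisymm ?_ ?_⟩
  · rw [span_le]
    rintro _ ⟨i, rfl⟩
    by_cases hi : ∃ k, e k = i
    · obtain ⟨k, rfl⟩ := hi
      rw [e.injective.extend_apply]
      exact (b k).2
    · rw [Function.extend_apply' _ _ _ hi]
      exact W.zero_mem
  · have hb : W = span F (Set.range (W.subtype ∘ b)) := by
      rw [Set.range_comp, span_image, b.span_eq, map_subtype_top]
    refine hb.le.trans (span_mono ?_)
    rintro _ ⟨k, rfl⟩
    exact ⟨e k, e.injective.extend_apply _ _ k⟩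

theorem exists_finset_span_eq_card_le (W : Submodule F M) [FiniteDimensional F W] :
    ∃ s : Finset M, span F (s : Set M) = W ∧ s.card ≤ Module.finrank F W := by
  classical
  obtain ⟨f, hf⟩ := W.exists_span_range_eq_of_finrank_le (m := Fin (Module.finrank F W))
    (by rw [Fintype.card_fin])
  refine ⟨Finset.univ.image f, by rwa [Finset.coe_image, Finset.coe_univ, Set.image_univ], ?_⟩
  exact Finset.card_image_le.trans_eq (by rw [Finset.card_univ, Fintype.card_fin])

end Submodule

section Dissemination

variable {F V : Type*} [Field F] {n : ℕ} (E : V → V → Prop) (P T : V → Set (Fin n))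

def AdmissibleSubspaces (W : V → Submodule F (Fin n → F)) : Prop :=
  (∀ ℓ, W ℓ ≤ Submodule.pi (P ℓ)ᶜ fun _ => ⊥) ∧
  ∀ ℓ, ∀ η ∈ T ℓ, Pi.single η (1 : F) ∈
    (⨆ j ∈ {v | E v ℓ}, W j) ⊔ Submodule.span F {v | ∃ j ∈ P ℓ, v = Pi.single j 1}

theorem admissibleSubspaces_span_iff (s : V → Set (Fin n → F)) :
    AdmissibleSubspaces E P T (fun ℓ => Submodule.span F (s ℓ)) ↔
      (∀ ℓ, ∀ v ∈ s ℓ, ∀ i, i ∉ P ℓ → v i = 0) ∧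
      ∀ ℓ, ∀ η ∈ T ℓ, Pi.single η (1 : F) ∈
        Submodule.span F ((⋃ j ∈ {v | E v ℓ}, s j) ∪ {v | ∃ j ∈ P ℓ, v = Pi.single j 1}) := by
  simp only [AdmissibleSubspaces, Submodule.span_le, Set.subset_def, SetLike.mem_coe,
    Submodule.mem_pi, Set.mem_compl_iff, Submodule.mem_bot, Submodule.span_union,
    Submodule.span_iUnion₂]

theorem validScheme_iff_admissibleSubspaces (S : V → Finset (Fin n → F)) :
    ValidScheme E P T S ↔
      AdmissibleSubspaces E P T (fun ℓ => Submodule.span F (S ℓ : Set (Fin n → F))) :=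
  (admissibleSubspaces_span_iff E P T _).symm

theorem admissibleTuple_iff_admissibleSubspaces (A : V → Matrix (Fin n) (Fin n) F) :
    AdmissibleTuple E P T A ↔
      AdmissibleSubspaces E P T (fun ℓ => Submodule.span F (Set.range (A ℓ))) := by
  rw [admissibleSubspaces_span_iff, AdmissibleTuple]
  exact and_congr_left' (forall_congr' fun ℓ =>
    (Set.forall_mem_range (f := A ℓ) (p := fun v => ∀ i ∉ P ℓ, v i = 0)).symm)

variable [Fintype V] {E P T}

theorem AdmissibleSubspaces.exists_validScheme {W : V → Submodule F (Fin n → F)}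
    (hW : AdmissibleSubspaces E P T W) :
    ∃ S : V → Finset (Fin n → F), ValidScheme E P T S ∧
      ∑ ℓ, (S ℓ).card ≤ ∑ ℓ, Module.finrank F (W ℓ) := by
  choose S hspan hcard using fun ℓ => (W ℓ).exists_finset_span_eq_card_le
  refine ⟨S, ?_, Finset.sum_le_sum fun ℓ _ => hcard ℓ⟩
  rwa [validScheme_iff_admissibleSubspaces, funext hspan]

theorem AdmissibleSubspaces.exists_admissibleTuple {W : V → Submodule F (Fin n → F)}
    (hW : AdmissibleSubspaces E P T W) :
    ∃ A : V → Matrix (Fin n) (Fin n) F, AdmissibleTuple E P T A ∧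
      ∑ ℓ, (A ℓ).rank = ∑ ℓ, Module.finrank F (W ℓ) := by
  have hrows : ∀ ℓ, ∃ A : Matrix (Fin n) (Fin n) F, Submodule.span F (Set.range A) = W ℓ :=
    fun ℓ => (W ℓ).exists_span_range_eq_of_finrank_le
      ((W ℓ).finrank_le.trans_eq (by rw [Module.finrank_fin_fun, Fintype.card_fin]))
  choose A hA using hrows
  refine ⟨A, ?_, Finset.sum_congr rfl fun ℓ _ => ?_⟩
  · rwa [admissibleTuple_iff_admissibleSubspaces, funext hA]
  · rw [rank_eq_finrank_span_row, row, hA]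

theorem ValidScheme.exists_admissibleTuple_rank_le {S : V → Finset (Fin n → F)}
    (hS : ValidScheme E P T S) :
    ∃ A : V → Matrix (Fin n) (Fin n) F, AdmissibleTuple E P T A ∧
      ∑ ℓ, (A ℓ).rank ≤ ∑ ℓ, (S ℓ).card := by
  obtain ⟨A, hA, hrank⟩ :=
    ((validScheme_iff_admissibleSubspaces E P T S).1 hS).exists_admissibleTuple
  exact ⟨A, hA, hrank.trans_le <| Finset.sum_le_sum fun ℓ _ => finrank_span_finset_le_card (S ℓ)⟩

theorem AdmissibleTuple.exists_validScheme_card_le {A : V → Matrix (Fin n) (Fin n) F}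
    (hA : AdmissibleTuple E P T A) :
    ∃ S : V → Finset (Fin n → F), ValidScheme E P T S ∧
      ∑ ℓ, (S ℓ).card ≤ ∑ ℓ, (A ℓ).rank := by
  obtain ⟨S, hS, hcard⟩ :=
    ((admissibleTuple_iff_admissibleSubspaces E P T A).1 hA).exists_validScheme
  exact ⟨S, hS, hcard.trans_eq <| Finset.sum_congr rfl fun ℓ _ => (rank_eq_finrank_span_row _).symm⟩

end Dissemination

theorem oneRound_minimum_eq_minrank_general {F V : Type*} [Field F] [Fintype V] {n : ℕ}
    (E : V → V → Prop) (P T : V → Set (Fin n)) :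
    ((∃ A : V → Matrix (Fin n) (Fin n) F, AdmissibleTuple E P T A) →
      sInf {t : ℕ | ∃ S : V → Finset (Fin n → F),
          ValidScheme E P T S ∧ t = ∑ ℓ, (S ℓ).card}
        = sInf {t : ℕ | ∃ A : V → Matrix (Fin n) (Fin n) F,
            AdmissibleTuple E P T A ∧ t = ∑ ℓ, (A ℓ).rank}) ∧
    ((¬ ∃ A : V → Matrix (Fin n) (Fin n) F, AdmissibleTuple E P T A) →
      ¬ ∃ S : V → Finset (Fin n → F), ValidScheme E P T S) := by
  refine ⟨fun _ => csInf_eq_csInf_of_forall_exists_le ?_ ?_, ?_⟩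
  · rintro _ ⟨S, hS, rfl⟩
    obtain ⟨A, hA, hle⟩ := hS.exists_admissibleTuple_rank_le
    exact ⟨_, ⟨A, hA, rfl⟩, hle⟩
  · rintro _ ⟨A, hA, rfl⟩
    obtain ⟨S, hS, hle⟩ := hA.exists_validScheme_card_le
    exact ⟨_, ⟨S, hS, rfl⟩, hle⟩
  · rintro hno ⟨S, hS⟩
    obtain ⟨A, hA, -⟩ := hS.exists_admissibleTuple_rank_le
    exact hno ⟨A, hA⟩

/-- If at least one admissible tuple of matrices exists, then the minimum
total number of transmissions over all valid one-round schemes equals the minimum of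
`Σ_{ℓ ∈ V} rank (A ℓ)` over all admissible tuples; and if no admissible tuple exists, then
no valid one-round scheme exists. -/
theorem oneRound_minimum_eq_minrank {F V : Type*} [Field F] [Fintype V] {n : ℕ}
    (E : V → V → Prop) (P T : V → Set (Fin n)) (hT : ∀ ℓ, T ℓ ⊆ (P ℓ)ᶜ) :
    ((∃ A : V → Matrix (Fin n) (Fin n) F, AdmissibleTuple E P T A) →
      sInf {t : ℕ | ∃ S : V → Finset (Fin n → F),
          ValidScheme E P T S ∧ t = ∑ ℓ, (S ℓ).card}
        = sInf {t : ℕ | ∃ A : V → Matrix (Fin n) (Fin n) F,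
            AdmissibleTuple E P T A ∧ t = ∑ ℓ, (A ℓ).rank}) ∧
    ((¬ ∃ A : V → Matrix (Fin n) (Fin n) F, AdmissibleTuple E P T A) →
      ¬ ∃ S : V → Finset (Fin n → F), ValidScheme E P T S) :=
  oneRound_minimum_eq_minrank_general E P T
end

section
/- For every bipartite data dissemination instance over F₂ and every valid one-round scheme (S_a)_{a∈A}, the total number of transmissions Σ_{a∈A} |S_a| is at least minrank₂(H), where H is the side information graph of the instance. -/
open Matrix

/-- A valid one-round scheme for a bipartite data dissemination instance over `F₂`:
transmitters form the type `A`, receivers are `Fin n`, and `E a ℓ` means there is an edge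
from transmitter `a` to receiver `ℓ`. Each transmitter `a` broadcasts the finite set of
vectors `S a`, and every receiver `ℓ` (possessing the side information `{x_j : j ∈ P ℓ}`
and requesting `x_ℓ`) can decode: `e_ℓ` lies in the span of the vectors sent by the
transmitters adjacent to `ℓ` together with `{e_j : j ∈ P ℓ}`. -/
def BipartiteValidScheme {A : Type*} {n : ℕ} (E : A → Fin n → Prop)
    (P : Fin n → Set (Fin n)) (S : A → Finset (Fin n → ZMod 2)) : Prop :=
  ∀ ℓ : Fin n, Pi.single ℓ (1 : ZMod 2) ∈
    Submodule.span (ZMod 2)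
      ((⋃ a ∈ {a | E a ℓ}, (S a : Set (Fin n → ZMod 2))) ∪
        {v | ∃ j ∈ P ℓ, v = Pi.single j 1})

/-- A matrix `M` over `F₂` fits the side information graph `H` on `{1,…,n}` (with an edge
`(i,j)` iff `j ∈ P i`) if its diagonal entries are `1` and `M i j = 0` whenever `i ≠ j` and
`(i,j)` is not an edge of `H`. -/
def FitsSI {n : ℕ} (P : Fin n → Set (Fin n))
    (M : Matrix (Fin n) (Fin n) (ZMod 2)) : Prop :=
  (∀ i, M i i = 1) ∧ ∀ i j, i ≠ j → j ∉ P i → M i j = 0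

/-- `minrank₂` of the side information graph determined by `P`. -/
noncomputable def minrank2 {n : ℕ} (P : Fin n → Set (Fin n)) : ℕ :=
  sInf {r | ∃ M : Matrix (Fin n) (Fin n) (ZMod 2), FitsSI P M ∧ M.rank = r}

/-! Merging all transmitters into one that sends every transmitted vector only enlarges what each
receiver hears, so it suffices to bound a single broadcast `T`. Receiver `ℓ` decodes, hence
`e_ℓ = u_ℓ + w_ℓ` with `u_ℓ ∈ span T` and `w_ℓ` supported on `P ℓ`; the matrix with rows `u_ℓ`
then fits `H` and has rank at most `|T|`. -/

open Submodule

theorem Matrix.rank_le_card_of_row_mem_span {K m n : Type*} [Field K] [Finite m] [Fintype n]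
    (M : Matrix m n K) (T : Finset (n → K)) (hM : ∀ i, M i ∈ span K (T : Set (n → K))) :
    M.rank ≤ T.card := by
  rw [rank_eq_finrank_span_row]
  calc Module.finrank K (span K (Set.range M.row))
      ≤ Module.finrank K (span K (T : Set (n → K))) :=
        finrank_mono (span_le.mpr (Set.range_subset_iff.mpr hM))
    _ ≤ T.card := finrank_span_finset_le_card T

theorem apply_eq_zero_of_mem_span_single {R ι : Type*} [Semiring R] [DecidableEq ι]
    {s : Set ι} {v : ι → R} (hv : v ∈ span R {v | ∃ j ∈ s, v = Pi.single j 1})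
    {j : ι} (hj : j ∉ s) : v j = 0 := by
  have hle : span R {v : ι → R | ∃ j ∈ s, v = Pi.single j 1} ≤ pi sᶜ (fun _ => ⊥) := by
    refine span_le.mpr ?_
    rintro _ ⟨i, hi, rfl⟩ k hk
    have hki : k ≠ i := fun h => hk (h ▸ hi)
    simp [hki]
  simpa using mem_pi.mp (hle hv) j hj

theorem exists_fitsSI_rank_le_card {n : ℕ} (P : Fin n → Set (Fin n)) (hP : ∀ ℓ, ℓ ∉ P ℓ)
    (T : Finset (Fin n → ZMod 2))
    (hT : ∀ ℓ, Pi.single ℓ (1 : ZMod 2) ∈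
      span (ZMod 2) ((T : Set (Fin n → ZMod 2)) ∪ {v | ∃ j ∈ P ℓ, v = Pi.single j 1})) :
    ∃ M : Matrix (Fin n) (Fin n) (ZMod 2), FitsSI P M ∧ M.rank ≤ T.card := by
  have hrow : ∀ ℓ, ∃ u ∈ span (ZMod 2) (T : Set (Fin n → ZMod 2)),
      ∀ j ∉ P ℓ, u j = (Pi.single ℓ 1 : Fin n → ZMod 2) j := by
    intro ℓ
    have hℓ := hT ℓ
    rw [span_union] at hℓ
    obtain ⟨u, hu, w, hw, huw⟩ := mem_sup.mp hℓ
    refine ⟨u, hu, fun j hj => ?_⟩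
    rw [← huw, Pi.add_apply, apply_eq_zero_of_mem_span_single hw hj, add_zero]
  choose u hu hagree using hrow
  refine ⟨Matrix.of u, ⟨fun i => ?_, fun i j hij hj => ?_⟩,
    (Matrix.of u).rank_le_card_of_row_mem_span T hu⟩
  · simpa using hagree i i (hP i)
  · simpa [Pi.single_eq_of_ne hij.symm] using hagree i j hj

theorem minrank2_le_card {n : ℕ} (P : Fin n → Set (Fin n)) (hP : ∀ ℓ, ℓ ∉ P ℓ)
    (T : Finset (Fin n → ZMod 2))
    (hT : ∀ ℓ, Pi.single ℓ (1 : ZMod 2) ∈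
      span (ZMod 2) ((T : Set (Fin n → ZMod 2)) ∪ {v | ∃ j ∈ P ℓ, v = Pi.single j 1})) :
    minrank2 P ≤ T.card := by
  obtain ⟨M, hfit, hrank⟩ := exists_fitsSI_rank_le_card P hP T hT
  calc minrank2 P ≤ M.rank := Nat.sInf_le ⟨M, hfit, rfl⟩
    _ ≤ T.card := hrank

/-- For every bipartite data dissemination instance over `F₂` and every
valid one-round scheme `(S a)_{a ∈ A}`, the total number of transmissions `Σ_a |S a|` is
at least `minrank₂ H`, where `H` is the side information graph of the instance. -/
theorem bipartite_lower_bound_minrank {A : Type*} [Fintype A] {n : ℕ}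
    (E : A → Fin n → Prop) (P : Fin n → Set (Fin n)) (hP : ∀ ℓ, ℓ ∉ P ℓ)
    (S : A → Finset (Fin n → ZMod 2)) (hS : BipartiteValidScheme E P S) :
    minrank2 P ≤ ∑ a, (S a).card := by
  classical
  set T := Finset.univ.biUnion S
  have hsent : ∀ ℓ, (⋃ a ∈ {a | E a ℓ}, (S a : Set (Fin n → ZMod 2))) ⊆ T := by
    intro ℓ v hv
    obtain ⟨a, -, hva⟩ := Set.mem_iUnion₂.mp hv
    exact Finset.mem_biUnion.mpr ⟨a, Finset.mem_univ a, hva⟩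
  have hT := fun ℓ => span_mono (Set.union_subset_union_left _ (hsent ℓ)) (hS ℓ)
  exact (minrank2_le_card P hP T hT).trans Finset.card_biUnion_le
end

section
/- For every bipartite data dissemination instance over F₂ and every function t : B → A such that (t(b), b) ∈ E for all b ∈ B, there exists a valid one-round scheme whose total number of transmissions is at most Σ_{a∈A} minrank₂(H_a), where H_a is the induced subgraph of the side information graph H on the vertex set t⁻¹(a). -/
open Matrix

/-- `minrank₂` of the subgraph of the side information graph determined by `P` induced on
the vertex set `W ⊆ {1,…,n}`. -/
noncomputable def minrank2Induced {n : ℕ} (P : Fin n → Set (Fin n))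
    (W : Finset (Fin n)) : ℕ :=
  sInf {r | ∃ M : Matrix W W (ZMod 2),
    ((∀ i, M i i = 1) ∧
      ∀ i j : W, i ≠ j → (j : Fin n) ∉ P (i : Fin n) → M i j = 0) ∧ M.rank = r}

/-- Auxiliary: a vector supported on `P ℓ` lies in the span of the side-information
basis vectors. -/
lemma mem_span_side {n : ℕ} (Q : Set (Fin n)) (v : Fin n → ZMod 2)
    (hv : ∀ j, j ∉ Q → v j = 0) :
    v ∈ Submodule.span (ZMod 2) {w : Fin n → ZMod 2 | ∃ j ∈ Q, w = Pi.single j 1} := by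
  classical
  have hv' : v = ∑ j : Fin n, Pi.single j (v j) := (Finset.univ_sum_single v).symm
  rw [hv']
  refine Submodule.sum_mem _ fun j _ => ?_
  by_cases hj : j ∈ Q
  · have : Pi.single j (v j) = v j • (Pi.single j 1 : Fin n → ZMod 2) := by
      funext k
      by_cases hk : k = j
      · subst hk; simp
      · simp [Pi.single_eq_of_ne hk]
    rw [this]
    exact Submodule.smul_mem _ _ (Submodule.subset_span ⟨j, hj, rfl⟩)
  · rw [hv j hj, Pi.single_zero]
    exact Submodule.zero_mem _

lemma key_per_transmitter {n : ℕ} (P : Fin n → Set (Fin n)) (hP : ∀ ℓ, ℓ ∉ P ℓ)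
    (W : Finset (Fin n)) :
    ∃ S : Finset (Fin n → ZMod 2),
      S.card ≤ minrank2Induced P W ∧
      ∀ ℓ : Fin n, ℓ ∈ W →
        Pi.single ℓ (1 : ZMod 2) ∈ Submodule.span (ZMod 2)
          ((S : Set (Fin n → ZMod 2)) ∪ {v | ∃ j ∈ P ℓ, v = Pi.single j 1}) := by
  classical
  have hne : {r | ∃ M : Matrix W W (ZMod 2),
      ((∀ i, M i i = 1) ∧
        ∀ i j : W, i ≠ j → (j : Fin n) ∉ P (i : Fin n) → M i j = 0) ∧ M.rank = r}.Nonempty :=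
    ⟨(1 : Matrix W W (ZMod 2)).rank, 1,
      ⟨⟨fun i => Matrix.one_apply_eq i, fun i j hij _ => Matrix.one_apply_ne hij⟩, rfl⟩⟩
  obtain ⟨M, ⟨hdiag, hoff⟩, hrank⟩ := Nat.sInf_mem hne
  -- the extension linear map from vectors indexed by `W` to vectors indexed by `Fin n`
  let ext : ({x // x ∈ W} → ZMod 2) →ₗ[ZMod 2] (Fin n → ZMod 2) :=
    { toFun := fun v j => if h : j ∈ W then v ⟨j, h⟩ else 0
      map_add' := by intro x y; funext j; by_cases h : j ∈ W <;> simp [h]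
      map_smul' := by intro c x; funext j; by_cases h : j ∈ W <;> simp [h] }
  set p : Submodule (ZMod 2) ({x // x ∈ W} → ZMod 2) :=
    Submodule.span (ZMod 2) (Set.range (fun i => M i)) with hp
  haveI : FiniteDimensional (ZMod 2) p :=
    FiniteDimensional.span_of_finite _ (Set.finite_range M)
  let b := Module.finBasis (ZMod 2) p
  refine ⟨Finset.image (fun i => ext (b i : {x // x ∈ W} → ZMod 2)) Finset.univ,
    ?_, ?_⟩
  · calc (Finset.image (fun i => ext (b i : {x // x ∈ W} → ZMod 2))
        Finset.univ).card ≤ Finset.univ.card := Finset.card_image_le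
    _ = Module.finrank (ZMod 2) p := by simp
    _ = M.rank := (Matrix.rank_eq_finrank_span_row M).symm
    _ = minrank2Induced P W := hrank
  · intro ℓ hℓ
    set ℓ' : {x // x ∈ W} := ⟨ℓ, hℓ⟩ with hℓ'
    -- the row of M at ℓ, extended to Fin n
    have hrow_mem : M ℓ' ∈ p := Submodule.subset_span ⟨ℓ', rfl⟩
    -- p is spanned by the basis vectors
    have hspan : Submodule.span (ZMod 2) (p.subtype '' Set.range b) = p := by
      rw [← Submodule.map_span, b.span_eq, Submodule.map_subtype_top]
    have hext_mem : ext (M ℓ') ∈ Submodule.span (ZMod 2)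
        ((Finset.image (fun i => ext (b i : {x // x ∈ W} → ZMod 2))
          Finset.univ : Finset (Fin n → ZMod 2)) : Set (Fin n → ZMod 2)) := by
      have : ext (M ℓ') ∈ Submodule.map ext p := ⟨M ℓ', hrow_mem, rfl⟩
      rw [← hspan, Submodule.map_span] at this
      have himg : ⇑ext '' Set.range (⇑p.subtype ∘ ⇑b) =
          ((Finset.image (fun i => ext (b i : {x // x ∈ W} → ZMod 2))
            Finset.univ : Finset (Fin n → ZMod 2)) : Set (Fin n → ZMod 2)) := by
        rw [← Set.range_comp, Finset.coe_image, Finset.coe_univ, Set.image_univ]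
        rfl
      rw [← Set.range_comp] at this
      rwa [himg] at this
    -- the correction vector is supported on P ℓ
    have hw : Pi.single ℓ (1 : ZMod 2) - ext (M ℓ') ∈
        Submodule.span (ZMod 2) {v : Fin n → ZMod 2 | ∃ j ∈ P ℓ, v = Pi.single j 1} := by
      refine mem_span_side (P ℓ) _ fun j hj => ?_
      by_cases hjl : j = ℓ
      · subst hjl
        have : ext (M ℓ') j = 1 := by
          show (if h : j ∈ W then M ℓ' ⟨j, h⟩ else 0) = 1
          rw [dif_pos hℓ]
          exact hdiag ℓ'
        simp [this, Pi.single_eq_same]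
      · have h1 : (Pi.single ℓ 1 : Fin n → ZMod 2) j = 0 := by
          rw [Pi.single_apply, if_neg hjl]
        have h2 : ext (M ℓ') j = 0 := by
          show (if h : j ∈ W then M ℓ' ⟨j, h⟩ else 0) = 0
          by_cases hjW : j ∈ W
          · rw [dif_pos hjW]
            exact hoff ℓ' ⟨j, hjW⟩ (by simpa [hℓ', Subtype.ext_iff] using Ne.symm hjl) hj
          · rw [dif_neg hjW]
        simp [h1, h2]
    have : Pi.single ℓ (1 : ZMod 2) = ext (M ℓ') + (Pi.single ℓ (1 : ZMod 2) - ext (M ℓ')) := by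
      ring
    rw [this]
    exact Submodule.add_mem _
      (Submodule.span_mono Set.subset_union_left hext_mem)
      (Submodule.span_mono Set.subset_union_right hw)

/-- For every bipartite data dissemination instance over `F₂` and every
function `t : B → A` such that `(t b, b) ∈ E` for all `b ∈ B`, there exists a valid
one-round scheme whose total number of transmissions is at most
`Σ_{a ∈ A} minrank₂ (H_a)`, where `H_a` is the induced subgraph of the side information
graph `H` on the vertex set `t⁻¹(a)`. -/

theorem bipartite_upper_bound_partition {A : Type*} [Fintype A] [DecidableEq A] {n : ℕ}
    (E : A → Fin n → Prop) (P : Fin n → Set (Fin n)) (hP : ∀ ℓ, ℓ ∉ P ℓ)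
    (t : Fin n → A) (ht : ∀ b, E (t b) b) :
    ∃ S : A → Finset (Fin n → ZMod 2), BipartiteValidScheme E P S ∧
      ∑ a, (S a).card ≤
        ∑ a, minrank2Induced P (Finset.univ.filter fun b => t b = a) := by
  classical
  choose S hcard hmem using fun a => key_per_transmitter P hP
    (Finset.univ.filter fun b => t b = a)
  refine ⟨S, ?_, Finset.sum_le_sum fun a _ => hcard a⟩
  intro ℓ
  have hℓ : ℓ ∈ Finset.univ.filter fun b => t b = t ℓ := by simp
  refine Submodule.span_mono ?_ (hmem (t ℓ) ℓ hℓ)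
  refine Set.union_subset_union_left _ ?_
  exact Set.subset_biUnion_of_mem (u := fun a => ((S a : Set (Fin n → ZMod 2))))
    (show t ℓ ∈ {a | E a ℓ} from ht ℓ)
end

section
/- Consider a network with a linear multi-round protocol with r rounds and request sets T_ℓ ⊆ {1,…,n} \ P_ℓ. For i ∈ {1,…,n} and ℓ ∈ V, let d_ℓ(i) denote the minimum, over nodes j with i ∈ P_j, of the length of the shortest directed walk from j to ℓ in G (with d_ℓ(i) = 0 when i ∈ P_ℓ). If the protocol satisfies all requests, then its total number of transmissions is at least max_{ℓ∈V} Σ_{i∈T_ℓ} d_ℓ(i). -/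
open Matrix

/-- `WalkLen E m u v` : there is a directed walk of length `m` from `u` to `v` in the
directed graph with edge relation `E` (a walk of length `0` goes from a node to itself). -/
def WalkLen {V : Type*} (E : V → V → Prop) (m : ℕ) (u v : V) : Prop :=
  ∃ w : ℕ → V, w 0 = u ∧ w m = v ∧ ∀ t < m, E (w t) (w (t + 1))

/-- The knowledge subspaces of a linear multi-round protocol: `S i ℓ` is the finite set of
vectors broadcast by node `ℓ` in round `i + 1`; `knowledge E P S i ℓ ⊆ F^n` is the
subspace known to node `ℓ` after `i` rounds, starting from
`K_ℓ^(0) = span {e_j : j ∈ P ℓ}` and adding, in each round, the span of everything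
transmitted by the in-neighbors of `ℓ`. -/
def knowledge {F V : Type*} [Field F] {n : ℕ} (E : V → V → Prop)
    (P : V → Set (Fin n)) (S : ℕ → V → Finset (Fin n → F)) :
    ℕ → V → Submodule F (Fin n → F)
  | 0, ℓ => Submodule.span F {v | ∃ j ∈ P ℓ, v = Pi.single j 1}
  | (i + 1), ℓ => knowledge E P S i ℓ ⊔
      Submodule.span F (⋃ v ∈ {v | E v ℓ}, (S i v : Set (Fin n → F)))

/-- `S` is a linear multi-round protocol with `r` rounds: in each round every node only
transmits vectors it knows, i.e. `S i ℓ ⊆ K_ℓ^(i)` (the set `S i ℓ` being what `ℓ`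
broadcasts in round `i + 1`). -/
def IsProtocol {F V : Type*} [Field F] {n : ℕ} (E : V → V → Prop)
    (P : V → Set (Fin n)) (S : ℕ → V → Finset (Fin n → F)) (r : ℕ) : Prop :=
  ∀ i < r, ∀ ℓ, (S i ℓ : Set (Fin n → F)) ⊆ knowledge E P S i ℓ

lemma walkLen_cons {V : Type*} {E : V → V → Prop} {m : ℕ} {u v ℓ : V}
    (he : E u v) (h : WalkLen E m v ℓ) : WalkLen E (m + 1) u ℓ := by
  obtain ⟨w, h0, hm', hwalk⟩ := h
  refine ⟨fun s => if s = 0 then u else w (s - 1), rfl, by simp [hm'], ?_⟩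
  intro s hs
  rcases Nat.eq_zero_or_pos s with h | h
  · subst h; simpa [h0] using he
  · have h1 : s - 1 < m := by omega
    have h2 : s ≠ 0 := by omega
    have h3 : s + 1 ≠ 0 := by omega
    have h4 : s + 1 - 1 = (s - 1) + 1 := by omega
    simp only [h2, h3, if_false, h4]
    exact hwalk _ h1

/-- Structural lemma: the knowledge of every node within distance `t` of `ℓ` stays in
any submodule `Q` containing the initial knowledge of nodes within distance `t` and all
transmissions of nodes at distance exactly `t+1`. -/
lemma knowledge_le_of_close {F V : Type*} [Field F] {n r : ℕ} {E : V → V → Prop}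
    {P : V → Set (Fin n)} {S : ℕ → V → Finset (Fin n → F)}
    (hS : IsProtocol E P S r) (ℓ : V) (t : ℕ) (Q : Submodule F (Fin n → F))
    (hP : ∀ v, (∃ m ≤ t, WalkLen E m v ℓ) → ∀ j ∈ P v, Pi.single j (1 : F) ∈ Q)
    (hX : ∀ i < r, ∀ u : V, (∃ m ≤ t + 1, WalkLen E m u ℓ) →
      ¬(∃ m ≤ t, WalkLen E m u ℓ) → (S i u : Set (Fin n → F)) ⊆ (Q : Set (Fin n → F))) :
    ∀ i ≤ r, ∀ v, (∃ m ≤ t, WalkLen E m v ℓ) → knowledge E P S i v ≤ Q := by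
  intro i
  induction i with
  | zero =>
    intro _ v hv
    rw [knowledge, Submodule.span_le]
    rintro x ⟨j, hj, rfl⟩
    exact hP v hv j hj
  | succ i ih =>
    intro hir v hv
    rw [knowledge]
    refine sup_le (ih (by omega) v hv) ?_
    rw [Submodule.span_le]
    rintro x hx
    simp only [Set.mem_iUnion] at hx
    obtain ⟨u, hu, hxu⟩ := hx
    have hu' : u ∈ {v_1 | E v_1 v} := by simpa using hu
    have hir' : i < r := by omega
    have huA : ∃ m ≤ t + 1, WalkLen E m u ℓ := by
      obtain ⟨m, hm, hw⟩ := hv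
      exact ⟨m + 1, by omega, walkLen_cons hu' hw⟩
    by_cases hut : ∃ m ≤ t, WalkLen E m u ℓ
    · exact ih (by omega) u hut (hS i hir' u hxu)
    · exact hX i hir' u huA hut hxu

/-- Counting lemma: if each `e_j`, `j ∈ D`, lies in the span of `Y ∪ X` where all vectors
of `Y` vanish on `D`, then `|D| ≤ |X|`. -/
lemma card_le_of_single_mem_span {F : Type*} [Field F] {n : ℕ}
    (D : Finset (Fin n)) (X : Finset (Fin n → F)) (Y : Set (Fin n → F))
    (hY : ∀ y ∈ Y, ∀ j ∈ D, y j = 0)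
    (hmem : ∀ j ∈ D, Pi.single j (1 : F) ∈ Submodule.span F (Y ∪ ↑X)) :
    D.card ≤ X.card := by
  classical
  set π : (Fin n → F) →ₗ[F] ({x // x ∈ D} → F) :=
    LinearMap.funLeft F F (fun j : {x // x ∈ D} => (j : Fin n)) with hπ_def
  have hgen : ∀ jj : {x // x ∈ D}, Pi.single jj (1 : F) ∈
      Submodule.span F ((↑(X.image π) : Set ({x // x ∈ D} → F))) := by
    intro jj
    have h2 : π (Pi.single (jj : Fin n) (1 : F)) ∈
        Submodule.map π (Submodule.span F (Y ∪ ↑X)) :=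
      Submodule.mem_map_of_mem (hmem jj jj.2)
    rw [Submodule.map_span, Set.image_union] at h2
    have h3 : (π '' Y) ∪ (π '' ↑X) ⊆ insert 0 (π '' ↑X) := by
      rintro y (⟨x, hx, rfl⟩ | hy)
      · refine Or.inl ?_
        funext kk
        simp [hπ_def, LinearMap.funLeft_apply, hY x hx kk kk.2]
      · exact Or.inr hy
    have h4 := Submodule.span_mono h3 h2
    rw [Submodule.span_insert_zero] at h4
    have h5 : π (Pi.single (jj : Fin n) (1 : F)) = Pi.single jj (1 : F) := by
      funext kk
      simp only [hπ_def, LinearMap.funLeft_apply, Pi.single_apply]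
      by_cases h : kk = jj
      · simp [h]
      · have : (kk : Fin n) ≠ (jj : Fin n) := fun hc => h (Subtype.ext hc)
        simp [h, this]
    rw [h5] at h4
    rwa [Finset.coe_image]
  have htop : (⊤ : Submodule F ({x // x ∈ D} → F)) ≤
      Submodule.span F ((↑(X.image π) : Set ({x // x ∈ D} → F))) := by
    rw [← (Pi.basisFun F {x // x ∈ D}).span_eq, Submodule.span_le]
    rintro x ⟨jj, rfl⟩
    simpa [Pi.basisFun_apply] using hgen jj
  calc D.card = Module.finrank F ({x // x ∈ D} → F) := by
        simp [Module.finrank_pi, Fintype.card_coe]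
    _ = Module.finrank F (Submodule.span F ((↑(X.image π) : Set ({x // x ∈ D} → F)))) := by
        rw [le_antisymm le_top htop]
        exact (finrank_top F ({x // x ∈ D} → F)).symm
    _ ≤ (X.image π).card := finrank_span_finset_le_card _
    _ ≤ X.card := Finset.card_image_le

set_option maxHeartbeats 1000000 in
/-- Consider a network with a linear multi-round protocol with `r` rounds
and request sets `T ℓ ⊆ {1,…,n} \ P ℓ`. For `i` and `ℓ`, `d_ℓ(i)` is the minimum, over
nodes `j` with `i ∈ P j`, of the length of the shortest directed walk from `j` to `ℓ`.
If the protocol satisfies all requests, then its total number of transmissions is at least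
`max_{ℓ ∈ V} Σ_{i ∈ T ℓ} d_ℓ(i)`. -/
theorem total_transmissions_lower_bound {F V : Type*} [Field F] [Fintype V] {n r : ℕ}
    (E : V → V → Prop) (P : V → Set (Fin n)) (T : V → Finset (Fin n))
    (hT : ∀ ℓ, ∀ i ∈ T ℓ, i ∉ P ℓ)
    (hfeas : ∀ ℓ : V, ∀ i ∈ T ℓ, ∃ j m, i ∈ P j ∧ WalkLen E m j ℓ)
    (S : ℕ → V → Finset (Fin n → F)) (hS : IsProtocol E P S r)
    (hsat : ∀ ℓ : V, ∀ j ∈ T ℓ, Pi.single j (1 : F) ∈ knowledge E P S r ℓ) :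
    Finset.univ.sup
        (fun ℓ : V => ∑ i ∈ T ℓ, sInf {m | ∃ j, i ∈ P j ∧ WalkLen E m j ℓ})
      ≤ ∑ i ∈ Finset.range r, ∑ ℓ, (S i ℓ).card := by
  classical
  refine Finset.sup_le fun ℓ _ => ?_
  set d : Fin n → ℕ := fun i => sInf {m | ∃ j, i ∈ P j ∧ WalkLen E m j ℓ} with hd_def
  have hd_le : ∀ {j : Fin n} {u : V} {m : ℕ}, j ∈ P u → WalkLen E m u ℓ → d j ≤ m :=
    fun hj hw => Nat.sInf_le ⟨_, hj, hw⟩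
  set C : ℕ → Finset V := fun t => Finset.univ.filter fun u : V =>
    (∃ m ≤ t + 1, WalkLen E m u ℓ) ∧ ¬(∃ m ≤ t, WalkLen E m u ℓ) with hC_def
  set XF : ℕ → Finset (Fin n → F) := fun t =>
    (Finset.range r).biUnion fun i => (C t).biUnion fun u => S i u with hXF_def
  -- counting lemma for each cut level t
  have key : ∀ t, ((T ℓ).filter fun j => t < d j).card ≤ (XF t).card := by
    intro t
    refine card_le_of_single_mem_span _ _
      {x | ∃ j : Fin n, (∃ u, (∃ m ≤ t, WalkLen E m u ℓ) ∧ j ∈ P u) ∧ x = Pi.single j 1}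
      ?_ ?_
    · rintro y ⟨j', ⟨u, ⟨m, hm, hw⟩, hju⟩, rfl⟩ j hj
      have hdj' : d j' ≤ t := le_trans (hd_le hju hw) hm
      have htj : t < d j := (Finset.mem_filter.mp hj).2
      have : j ≠ j' := by intro h; rw [h] at htj; omega
      simp [Pi.single_apply, this]
    · intro j hj
      have hjT : j ∈ T ℓ := (Finset.mem_filter.mp hj).1
      refine knowledge_le_of_close hS ℓ t _ ?_ ?_ r le_rfl ℓ
        ⟨0, Nat.zero_le _, fun _ => ℓ, rfl, rfl, by omega⟩ (hsat ℓ j hjT)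
      · intro v hv j' hj'
        exact Submodule.subset_span (Or.inl ⟨j', ⟨v, hv, hj'⟩, rfl⟩)
      · intro i hir u h1 h2 x hx
        refine Submodule.subset_span (Or.inr ?_)
        simp only [hXF_def, hC_def, Finset.mem_coe, Finset.mem_biUnion, Finset.mem_range,
          Finset.mem_filter, Finset.mem_univ, true_and]
        exact ⟨i, hir, u, ⟨h1, h2⟩, hx⟩
  set N : ℕ := (T ℓ).sup d with hN_def
  have huniq : ∀ (u : V) (t1 t2 : ℕ), u ∈ C t1 → u ∈ C t2 → t1 = t2 := by
    intro u t1 t2 h1 h2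
    simp only [hC_def, Finset.mem_filter, Finset.mem_univ, true_and] at h1 h2
    rcases lt_trichotomy t1 t2 with h | h | h
    · obtain ⟨m, hm, hw⟩ := h1.1
      exact absurd ⟨m, by omega, hw⟩ h2.2
    · exact h
    · obtain ⟨m, hm, hw⟩ := h2.1
      exact absurd ⟨m, by omega, hw⟩ h1.2
  calc ∑ j ∈ T ℓ, d j
      = ∑ j ∈ T ℓ, ((Finset.range N).filter fun t => t < d j).card := by
        refine Finset.sum_congr rfl fun j hj => ?_
        have hdN : d j ≤ N := Finset.le_sup hj
        have : (Finset.range N).filter (fun t => t < d j) = Finset.range (d j) := by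
          ext t
          simp only [Finset.mem_filter, Finset.mem_range]
          omega
        rw [this, Finset.card_range]
    _ = ∑ j ∈ T ℓ, ∑ t ∈ Finset.range N, if t < d j then 1 else 0 :=
        Finset.sum_congr rfl fun j _ => Finset.card_filter _ _
    _ = ∑ t ∈ Finset.range N, ∑ j ∈ T ℓ, if t < d j then 1 else 0 := Finset.sum_comm
    _ = ∑ t ∈ Finset.range N, ((T ℓ).filter fun j => t < d j).card :=
        Finset.sum_congr rfl fun t _ => (Finset.card_filter _ _).symm
    _ ≤ ∑ t ∈ Finset.range N, (XF t).card := Finset.sum_le_sum fun t _ => key t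
    _ ≤ ∑ t ∈ Finset.range N, ∑ i ∈ Finset.range r, ∑ u ∈ C t, (S i u).card := by
        refine Finset.sum_le_sum fun t _ => ?_
        refine le_trans Finset.card_biUnion_le ?_
        exact Finset.sum_le_sum fun i _ => Finset.card_biUnion_le
    _ = ∑ i ∈ Finset.range r, ∑ t ∈ Finset.range N, ∑ u ∈ C t, (S i u).card :=
        Finset.sum_comm
    _ ≤ ∑ i ∈ Finset.range r, ∑ u, (S i u).card := by
        refine Finset.sum_le_sum fun i _ => ?_
        calc ∑ t ∈ Finset.range N, ∑ u ∈ C t, (S i u).card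
            = ∑ t ∈ Finset.range N, ∑ u, if u ∈ C t then (S i u).card else 0 := by
              refine Finset.sum_congr rfl fun t _ => ?_
              rw [Finset.sum_ite_mem, Finset.univ_inter]
          _ = ∑ u, ∑ t ∈ Finset.range N, if u ∈ C t then (S i u).card else 0 :=
              Finset.sum_comm
          _ ≤ ∑ u, (S i u).card := by
              refine Finset.sum_le_sum fun u _ => ?_
              rw [← Finset.sum_filter]
              have hcard : ((Finset.range N).filter fun t => u ∈ C t).card ≤ 1 :=
                Finset.card_le_one.mpr fun a ha b hb =>
                  huniq u a b (Finset.mem_filter.mp ha).2 (Finset.mem_filter.mp hb).2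
              calc ∑ _t ∈ (Finset.range N).filter (fun t => u ∈ C t), (S i u).card
                  = ((Finset.range N).filter fun t => u ∈ C t).card * (S i u).card := by
                    rw [Finset.sum_const, smul_eq_mul]
                _ ≤ 1 * (S i u).card := Nat.mul_le_mul_right _ hcard
                _ = (S i u).card := one_mul _
end

section
/- Let F be a field and let G = (V, E) be a directed graph such that for every ordered pair of nodes (u,v) there is a directed walk from u to v of length at most r. Let P_ℓ ⊆ {1,…,n} for ℓ ∈ V, and define Q_ℓ^(0) = P_ℓ and Q_ℓ^(i) = Q_ℓ^(i−1) ∪ ⋃_{v ∈ N_in(ℓ)} Q_v^(i−1). For each round i ∈ {1,…,r}, let τ_i be the minimum of Σ_{j∈V} rank(A_j) over all tuples (A_j)_{j∈V} of n×n matrices over F such that every entry of A_j in a column outside Q_j^(i−1) is zero, and such that for every ℓ ∈ V the matrix obtained by stacking the matrices A_j for j ∈ N_in(ℓ) together with the rows {e_m : m ∈ Q_ℓ^(i−1)} has rank equal to |Q_ℓ^(i)|. Then there exists a linear multi-round protocol with r rounds whose total number of transmissions equals Σ_{i=1}^r τ_i and such that K_ℓ^(r) contains e_j for every ℓ ∈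 V and every j ∈ ⋃_{v∈V} P_v (in particular, all requests T_ℓ ⊆ {1,…,n} \ P_ℓ are satisfied). -/
open Matrix

/-- Evolution of possession sets under full forwarding: `Qset E P 0 ℓ = P ℓ` and after
each round every node's possession becomes the union of its own and its in-neighbors'
previous possessions. -/
def Qset {V : Type*} {n : ℕ} (E : V → V → Prop) (P : V → Set (Fin n)) :
    ℕ → V → Set (Fin n)
  | 0, ℓ => P ℓ
  | (i + 1), ℓ => Qset E P i ℓ ∪ ⋃ v ∈ {v | E v ℓ}, Qset E P i v

open Submodule Module

/-!
For each round pick a tuple `A` attaining `τ i`; the set of costs is nonempty because the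
diagonal projections onto the coordinates `Q_j^(i)` realize full forwarding. In round `i + 1`
node `j` broadcasts a basis of the row space of `A j` chosen among its rows. By induction,
`K_ℓ^(i)` contains the coordinate subspace of `Q_ℓ^(i)`: the rows of `A j` are supported in
`Q_j^(i)`, so they are known to `j`, and the span of the stacked matrix seen by `ℓ` lies in
the coordinate subspace of `Q_ℓ^(i+1)` and has the same dimension, so equals it. Walks of
length at most `r` finally put every `P u` inside `Q_ℓ^(r)`.
-/

lemma Pi.single_one_mem_spanSubset {R ι : Type*} [Semiring R] [Finite ι] [DecidableEq ι]
    {s : Set ι} {i : ι} (h : i ∈ s) : Pi.single i (1 : R) ∈ Pi.spanSubset R s :=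
  subset_span ⟨i, h, Pi.basisFun_apply R ι i⟩

lemma span_setOf_single_one_eq_spanSubset {R ι : Type*} [Semiring R] [Finite ι] [DecidableEq ι]
    (s : Set ι) : span R {v : ι → R | ∃ i ∈ s, v = Pi.single i 1} = Pi.spanSubset R s := by
  rw [Pi.spanSubset]
  congr 1
  ext v
  simp [eq_comm]

lemma Matrix.exists_finset_subset_range_card_eq_rank {R m k : Type*} [Field R] [Fintype m]
    [Fintype k] (A : Matrix m k R) :
    ∃ s : Finset (k → R), ↑s ⊆ Set.range A ∧ span R ↑s = span R (Set.range A) ∧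
      s.card = A.rank := by
  obtain ⟨b, hbA, hspan, hli⟩ := exists_linearIndependent R (Set.range A)
  have hb : b.Finite := (Set.finite_range A).subset hbA
  refine ⟨hb.toFinset, by simpa using hbA, by simpa using hspan, ?_⟩
  rw [rank_eq_finrank_span_row,
    ← finrank_span_finset_eq_card (R := R) (s := hb.toFinset) (by rw [hb.coe_toFinset]; exact hli),
    hb.coe_toFinset, hspan]
  rfl

section Qset

variable {V : Type*} {n : ℕ} {E : V → V → Prop} {P : V → Set (Fin n)}

lemma Qset_subset_Qset_succ (i : ℕ) (ℓ : V) : Qset E P i ℓ ⊆ Qset E P (i + 1) ℓ :=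
  Set.subset_union_left

lemma Qset_subset_Qset_succ_of_adj {v ℓ : V} (h : E v ℓ) (i : ℕ) :
    Qset E P i v ⊆ Qset E P (i + 1) ℓ :=
  fun _ hx => Or.inr (Set.mem_biUnion h hx)

lemma Qset_monotone (ℓ : V) : Monotone fun i => Qset E P i ℓ :=
  monotone_nat_of_le_succ fun i => Qset_subset_Qset_succ i ℓ

lemma WalkLen.subset_Qset {m : ℕ} {u v : V} (h : WalkLen E m u v) : P u ⊆ Qset E P m v := by
  obtain ⟨w, rfl, rfl, hw⟩ := h
  suffices ∀ t ≤ m, P (w 0) ⊆ Qset E P t (w t) from this m le_rfl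
  intro t
  induction t with
  | zero => exact fun _ => subset_rfl
  | succ t ih => exact fun ht =>
      (ih (by omega)).trans (Qset_subset_Qset_succ_of_adj (hw t (by omega)) t)

end Qset

section RoundCode

variable {F V : Type*} [Field F] {n : ℕ} (E : V → V → Prop) (P : V → Set (Fin n))

/-- The row space of the matrix that node `ℓ` sees in round `i + 1`: the matrices `A j` of its
in-neighbors stacked on the unit rows `e_m`, `m ∈ Q_ℓ^(i)`. -/
def stackedSpan (i : ℕ) (A : V → Matrix (Fin n) (Fin n) F) (ℓ : V) :
    Submodule F (Fin n → F) :=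
  span F ((⋃ j ∈ {v | E v ℓ}, Set.range (A j)) ∪
    {v | ∃ m ∈ Qset E P i ℓ, v = Pi.single m 1})

/-- The admissible tuples `(A j)_j` of round `i + 1`, over which `τ i` is minimized. -/
def IsRoundCode (i : ℕ) (A : V → Matrix (Fin n) (Fin n) F) : Prop :=
  (∀ j p q, q ∉ Qset E P i j → A j p q = 0) ∧
    ∀ ℓ, finrank F (stackedSpan E P i A ℓ) = (Qset E P (i + 1) ℓ).ncard

/-- Full forwarding: node `j` sends every unit vector `e_m` with `m ∈ Q_j^(i)`. -/
noncomputable def fullForwarding (i : ℕ) : V → Matrix (Fin n) (Fin n) F :=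
  fun j => diagonal ((Qset E P i j).indicator 1)

variable {E P}

lemma stackedSpan_le_spanSubset {i : ℕ} {A : V → Matrix (Fin n) (Fin n) F}
    (hA : ∀ j p q, q ∉ Qset E P i j → A j p q = 0) (ℓ : V) :
    stackedSpan E P i A ℓ ≤ Pi.spanSubset F (Qset E P (i + 1) ℓ) := by
  rw [stackedSpan, span_le]
  rintro v (hv | ⟨m, hm, rfl⟩)
  · obtain ⟨j, hj, p, rfl⟩ := Set.mem_iUnion₂.1 hv
    exact Pi.mem_spanSubset_iff.2 fun q hq =>
      hA j p q fun hqj => hq (Qset_subset_Qset_succ_of_adj hj i hqj)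
  · exact Pi.single_one_mem_spanSubset (Qset_subset_Qset_succ i ℓ hm)

lemma IsRoundCode.stackedSpan_eq {i : ℕ} {A : V → Matrix (Fin n) (Fin n) F}
    (hA : IsRoundCode E P i A) (ℓ : V) :
    stackedSpan E P i A ℓ = Pi.spanSubset F (Qset E P (i + 1) ℓ) :=
  eq_of_le_of_finrank_le (stackedSpan_le_spanSubset hA.1 ℓ) (by rw [Pi.dim_spanSubset, hA.2])

lemma isRoundCode_fullForwarding (i : ℕ) :
    IsRoundCode E P i (fullForwarding (F := F) E P i) := by
  have hcol : ∀ j p q, q ∉ Qset E P i j → fullForwarding (F := F) E P i j p q = 0 := by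
    intro j p q hq
    rw [fullForwarding, diagonal_apply]
    split_ifs with hpq
    exacts [Set.indicator_of_notMem (hpq ▸ hq) _, rfl]
  refine ⟨hcol, fun ℓ => ?_⟩
  suffices Pi.spanSubset F (Qset E P (i + 1) ℓ) ≤ stackedSpan E P i (fullForwarding E P i) ℓ by
    rw [le_antisymm (stackedSpan_le_spanSubset hcol ℓ) this, Pi.dim_spanSubset]
  rw [Pi.spanSubset, span_le]
  rintro _ ⟨m, hm | hm, rfl⟩
  · exact subset_span (Or.inr ⟨m, hm, Pi.basisFun_apply F _ m⟩)
  · obtain ⟨j, hj, hmj⟩ := Set.mem_iUnion₂.1 hm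
    refine subset_span (Or.inl (Set.mem_iUnion₂.2 ⟨j, hj, m, ?_⟩))
    rw [Pi.basisFun_apply]
    exact (row_diagonal _ m).trans (by rw [Set.indicator_of_mem hmj, Pi.one_apply])

variable (F E P) in
def roundCosts [Fintype V] (i : ℕ) : Set ℕ :=
  {t | ∃ A : V → Matrix (Fin n) (Fin n) F, IsRoundCode E P i A ∧ t = ∑ j, (A j).rank}

lemma exists_isRoundCode_sum_rank_eq_sInf [Fintype V] (i : ℕ) :
    ∃ A : V → Matrix (Fin n) (Fin n) F, IsRoundCode E P i A ∧
      ∑ j, (A j).rank = sInf (roundCosts F E P i) := by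
  obtain ⟨A, hA, hcost⟩ := Nat.sInf_mem (s := roundCosts F E P i)
    ⟨_, fullForwarding E P i, isRoundCode_fullForwarding i, rfl⟩
  exact ⟨A, hA, hcost.symm⟩

lemma spanSubset_Qset_le_knowledge {A : ℕ → V → Matrix (Fin n) (Fin n) F}
    {S : ℕ → V → Finset (Fin n → F)} (hA : ∀ i, IsRoundCode E P i (A i))
    (hS : ∀ i j, span F (Set.range (A i j)) ≤ span F (S i j : Set (Fin n → F))) (i : ℕ)
    (ℓ : V) : Pi.spanSubset F (Qset E P i ℓ) ≤ knowledge E P S i ℓ := by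
  induction i generalizing ℓ with
  | zero => exact (span_setOf_single_one_eq_spanSubset _).ge
  | succ i ih =>
    rw [← (hA i).stackedSpan_eq, stackedSpan, span_le]
    rintro v (hv | ⟨m, hm, rfl⟩)
    · obtain ⟨j, hj, hvj⟩ := Set.mem_iUnion₂.1 hv
      exact mem_sup_right <|
        span_mono (Set.subset_biUnion_of_mem (u := fun v => (S i v : Set (Fin n → F))) hj)
          (hS i j (subset_span hvj))
    · exact mem_sup_left (ih ℓ (Pi.single_one_mem_spanSubset hm))

end RoundCode

theorem exists_protocol_sum_minrank_general {F V : Type*} [Field F] [Fintype V] {n r : ℕ}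
    (E : V → V → Prop) (P : V → Set (Fin n))
    (hconn : ∀ u v : V, ∃ m ≤ r, WalkLen E m u v)
    (τ : ℕ → ℕ)
    (hτ : ∀ i, τ i = sInf {t : ℕ | ∃ A : V → Matrix (Fin n) (Fin n) F,
      (∀ j : V, ∀ p q, q ∉ Qset E P i j → A j p q = 0) ∧
      (∀ ℓ : V, Module.finrank F (Submodule.span F
          ((⋃ j ∈ {v | E v ℓ}, Set.range (A j)) ∪
            {v | ∃ m ∈ Qset E P i ℓ, v = Pi.single m 1}))
        = (Qset E P (i + 1) ℓ).ncard) ∧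
      t = ∑ j, (A j).rank}) :
    ∃ S : ℕ → V → Finset (Fin n → F), IsProtocol E P S r ∧
      (∑ i ∈ Finset.range r, ∑ ℓ, (S i ℓ).card = ∑ i ∈ Finset.range r, τ i) ∧
      ∀ ℓ : V, ∀ j ∈ ⋃ v : V, P v,
        Pi.single j (1 : F) ∈ knowledge E P S r ℓ := by
  have hτ' : ∀ i, τ i = sInf (roundCosts F E P i) := fun i =>
    (hτ i).trans (congrArg sInf (Set.ext fun _ => exists_congr fun _ => and_assoc.symm))
  choose A hA hcost using exists_isRoundCode_sum_rank_eq_sInf (F := F) (E := E) (P := P)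
  choose S hSrows hSspan hScard using fun i j => (A i j).exists_finset_subset_range_card_eq_rank
  have hK := spanSubset_Qset_le_knowledge hA fun i j => (hSspan i j).ge
  refine ⟨S, fun i _ ℓ => ?_, ?_, fun ℓ j hj => ?_⟩
  · rintro _ hv
    obtain ⟨p, rfl⟩ := hSrows i ℓ hv
    exact hK i ℓ (Pi.mem_spanSubset_iff.2 fun q hq => (hA i).1 ℓ p q hq)
  · exact Finset.sum_congr rfl fun i _ => by simp only [hScard, hcost, hτ']
  · obtain ⟨u, hu⟩ := Set.mem_iUnion.1 hj
    obtain ⟨m, hmr, hwalk⟩ := hconn u ℓ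
    exact hK r ℓ (Pi.single_one_mem_spanSubset (Qset_monotone ℓ hmr (hwalk.subset_Qset hu)))

/-- Suppose every ordered pair of nodes is joined by a directed walk of
length at most `r`, and the graph has a self-loop at every node. For each round
`i + 1 ∈ {1,…,r}`, let `τ i` be the minimum of `Σ_{j ∈ V} rank (A j)` over all tuples
`(A j)_{j ∈ V}` of `n × n` matrices over `F` such that every entry of `A j` in a column
outside `Q_j^(i)` is zero, and such that for every `ℓ ∈ V` the matrix obtained by
stacking the matrices `A j` for `j ∈ N_in(ℓ)` together with the rows
`{e_m : m ∈ Q_ℓ^(i)}` has rank equal to `|Q_ℓ^(i+1)|`. Then there exists a linear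
multi-round protocol with `r` rounds whose total number of transmissions equals
`Σ_{i=0}^{r-1} τ i` and such that `K_ℓ^(r)` contains `e_j` for every `ℓ ∈ V` and every
`j ∈ ⋃_{v ∈ V} P v` (in particular, all requests `T ℓ ⊆ {1,…,n} \ P ℓ` are
satisfied). -/
theorem exists_protocol_sum_minrank {F V : Type*} [Field F] [Fintype V] {n r : ℕ}
    (E : V → V → Prop) (hself : ∀ ℓ, E ℓ ℓ) (P : V → Set (Fin n))
    (hconn : ∀ u v : V, ∃ m ≤ r, WalkLen E m u v)
    (τ : ℕ → ℕ)
    (hτ : ∀ i, τ i = sInf {t : ℕ | ∃ A : V → Matrix (Fin n) (Fin n) F,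
      (∀ j : V, ∀ p q, q ∉ Qset E P i j → A j p q = 0) ∧
      (∀ ℓ : V, Module.finrank F (Submodule.span F
          ((⋃ j ∈ {v | E v ℓ}, Set.range (A j)) ∪
            {v | ∃ m ∈ Qset E P i ℓ, v = Pi.single m 1}))
        = (Qset E P (i + 1) ℓ).ncard) ∧
      t = ∑ j, (A j).rank}) :
    ∃ S : ℕ → V → Finset (Fin n → F), IsProtocol E P S r ∧
      (∑ i ∈ Finset.range r, ∑ ℓ, (S i ℓ).card = ∑ i ∈ Finset.range r, τ i) ∧
      ∀ ℓ : V, ∀ j ∈ ⋃ v : V, P v,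
        Pi.single j (1 : F) ∈ knowledge E P S r ℓ :=
  exists_protocol_sum_minrank_general E P hconn τ hτ
end
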